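/- Let m ≥ 1 and n ≥ 1. Let ρ₁,…,ρ_m ∈ (0,1) and positive weights ω₁,…,ω_m be such that ∑_{j=1}^m ω_j p(ρ_j) = ∫₀¹ p(ρ) dρ for every real polynomial p of degree at most 2m−1. Let t_n < t_{n+1}, set Δt = t_{n+1} − t_n and t_{n,j} = t_n + ρ_j Δt. Let B : ℝ → (real n×n matrices) satisfy zᵀB(t)z ≤ 0 for all z ∈ ℝⁿ and all t. If v_h : ℝ → ℝⁿ has every component a polynomial of degree at most m and satisfies the collocation equations v_h′(t_{n,j}) = B(t_{n,j}) v_h(t_{n,j}) for j = 1,…,m, then v_h(t_{n+1})ᵀ v_h(t_{n+1}) ≤ v_h(t_n)ᵀ v_h(t_n). -/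

import Mathlib

/-!
Let `r(x) = ‖v_h(t_n + x Δt)‖²`, a polynomial of degree `≤ 2m` in `x`. Its derivative has degree
`≤ 2m - 1`, so the quadrature rule integrates it exactly, and by the fundamental theorem of
calculus `r(1) - r(0) = ∑ ω_j r'(ρ_j)`. At a collocation node
`r'(ρ_j) = 2 Δt ⟨v_h, v_h'⟩ = 2 Δt ⟨v_h, B v_h⟩ ≤ 0`, and the weights are positive.
-/

open Matrix Polynomial

namespace Polynomial

variable {R ι : Type*} [CommSemiring R] [Fintype ι]

theorem eval_sum_sq (p : ι → R[X]) (t : R) :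
    (∑ i, p i ^ 2).eval t = (fun i => (p i).eval t) ⬝ᵥ fun i => (p i).eval t := by
  simp only [eval_finsetSum, sq, eval_mul, dotProduct]

theorem eval_derivative_sum_sq (p : ι → R[X]) (t : R) :
    (derivative (∑ i, p i ^ 2)).eval t
      = 2 * ((fun i => (p i).eval t) ⬝ᵥ fun i => (derivative (p i)).eval t) := by
  simp only [derivative_sum, derivative_sq, eval_finsetSum, eval_mul, eval_C, dotProduct,
    Finset.mul_sum, mul_assoc]

theorem natDegree_sum_sq_le {p : ι → R[X]} {m : ℕ} (h : ∀ i, (p i).natDegree ≤ m) :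
    (∑ i, p i ^ 2).natDegree ≤ 2 * m :=
  natDegree_sum_le_of_forall_le _ _ fun i _ => natDegree_pow_le.trans (Nat.mul_le_mul_left 2 (h i))

theorem natDegree_comp_linear_le (q : R[X]) (a b : R) :
    (q.comp (C a * X + C b)).natDegree ≤ q.natDegree :=
  natDegree_comp_le.trans (mul_le_of_le_one_right (Nat.zero_le _) natDegree_linear_le)

theorem eval_derivative_comp_linear (q : R[X]) (a b x : R) :
    (derivative (q.comp (C a * X + C b))).eval x = a * (derivative q).eval (a * x + b) := by
  rw [derivative_comp, eval_mul, eval_comp, derivative_add, derivative_C, add_zero,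
    derivative_C_mul_X, eval_C]
  simp only [eval_add, eval_mul, eval_C, eval_X]

end Polynomial

def IsExactQuadrature {ι : Type*} [Fintype ι] (ω ρ : ι → ℝ) (d : ℕ) : Prop :=
  ∀ q : ℝ[X], q.natDegree ≤ d → ∑ j, ω j * q.eval (ρ j) = ∫ x in (0 : ℝ)..1, q.eval x

theorem IsExactQuadrature.eval_one_sub_eval_zero {ι : Type*} [Fintype ι] {ω ρ : ι → ℝ} {d : ℕ}
    (hexact : IsExactQuadrature ω ρ d) {r : ℝ[X]} (hr : r.natDegree ≤ d + 1) :
    r.eval 1 - r.eval 0 = ∑ j, ω j * (derivative r).eval (ρ j) := by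
  rw [hexact _ ((natDegree_derivative_le r).trans (by omega))]
  exact (intervalIntegral.integral_eq_sub_of_hasDerivAt (fun x _ => r.hasDerivAt x)
    ((derivative r).continuous.intervalIntegrable 0 1)).symm

theorem collocation_stable
    (m n : ℕ)
    (ρ ω : Fin m → ℝ)
    (hω : ∀ j, 0 < ω j)
    (hquad : ∀ q : Polynomial ℝ, q.natDegree ≤ 2 * m - 1 →
      ∑ j, ω j * q.eval (ρ j) = ∫ x in (0 : ℝ)..1, q.eval x)
    (tn tn1 : ℝ) (ht : tn < tn1)
    (B : ℝ → Matrix (Fin n) (Fin n) ℝ)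
    (hB : ∀ (t : ℝ) (z : Fin n → ℝ), z ⬝ᵥ (B t).mulVec z ≤ 0)
    (p : Fin n → Polynomial ℝ)
    (hdeg : ∀ i, (p i).natDegree ≤ m)
    (vh vh' : ℝ → Fin n → ℝ)
    (hvh : ∀ t i, vh t i = (p i).eval t)
    (hvh' : ∀ t i, vh' t i = (p i).derivative.eval t)
    (hcol : ∀ j, vh' (tn + ρ j * (tn1 - tn))
      = (B (tn + ρ j * (tn1 - tn))).mulVec (vh (tn + ρ j * (tn1 - tn)))) :
    vh tn1 ⬝ᵥ vh tn1 ≤ vh tn ⬝ᵥ vh tn := by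
  have hv (t : ℝ) : (fun i => (p i).eval t) = vh t := funext fun i => (hvh t i).symm
  have hv' (t : ℝ) : (fun i => (derivative (p i)).eval t) = vh' t :=
    funext fun i => (hvh' t i).symm
  set Δ := tn1 - tn
  set r := (∑ i, p i ^ 2).comp (C Δ * X + C tn)
  have hr_eval (x : ℝ) : r.eval x = vh (Δ * x + tn) ⬝ᵥ vh (Δ * x + tn) := by
    simp only [r, eval_comp, eval_add, eval_mul, eval_C, eval_X, eval_sum_sq, hv]
  have hr_deg : r.natDegree ≤ 2 * m - 1 + 1 :=
    (natDegree_comp_linear_le _ _ _).trans ((natDegree_sum_sq_le hdeg).trans (by omega))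
  have hnode (j : Fin m) : ω j * (derivative r).eval (ρ j) ≤ 0 := by
    have hΔ : 0 ≤ Δ := sub_nonneg.mpr ht.le
    rw [eval_derivative_comp_linear, eval_derivative_sum_sq, hv, hv',
      show Δ * ρ j + tn = tn + ρ j * Δ by ring, hcol j]
    exact mul_nonpos_of_nonneg_of_nonpos (hω j).le
      (mul_nonpos_of_nonneg_of_nonpos hΔ (mul_nonpos_of_nonneg_of_nonpos zero_le_two (hB _ _)))
  have hstep := IsExactQuadrature.eval_one_sub_eval_zero hquad hr_deg
  rw [hr_eval, hr_eval, mul_one, mul_zero, zero_add, sub_add_cancel] at hstep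
  linarith [Finset.sum_nonpos fun j (_ : j ∈ Finset.univ) => hnode j]
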